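/- Suppose f = F' exists in a neighborhood of ξ_α, satisfies a Lipschitz condition there, and f(ξ_α) > 0. Let k = [αN] + 1 and define the kernel density estimator f̂(ξ_α) = N^{-3/4} Σ_{i=1}^N 1{ 2N^{1/4} |X_i − X_{k:N}| ≤ 1 }. Then for every c > 0 there is a constant A > 0, not depending on N, such that P( |f̂(ξ_α) − f(ξ_α)| > A (log N)^{1/2} / N^{1/4} ) = O(N^{-c}) as N → ∞. -/

import Mathlib

open MeasureTheory ProbabilityTheory Filter Real Set

noncomputable section

/-- The `i`-th order statistic (1-indexed) of the sample `X 1, …, X N`. -/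
def orderStat {Ω : Type*} (X : ℕ → Ω → ℝ) (N i : ℕ) (ω : Ω) : ℝ :=
  ((List.ofFn fun j : Fin N => X (j + 1) ω).insertionSort (· ≤ ·)).getD (i - 1) 0

/-- Left-continuous inverse (quantile function) of a distribution function. -/
def quantile (F : ℝ → ℝ) (u : ℝ) : ℝ := sInf {x | u ≤ F x}

/-- The trimmed mean `([bN] − [aN])⁻¹ Σ_{i=[aN]+1}^{[bN]} X_{i:N}`. -/
def trimmedMean (a b : ℝ) {Ω : Type*} (X : ℕ → Ω → ℝ) (N : ℕ) (ω : Ω) : ℝ :=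
  (1 / ((⌊b * (N : ℝ)⌋ : ℝ) - (⌊a * (N : ℝ)⌋ : ℝ))) *
    ∑ i ∈ Finset.Icc ((⌊a * (N : ℝ)⌋).toNat + 1) (⌊b * (N : ℝ)⌋).toNat, orderStat X N i ω

/-- The `N^{-1/2}`-normalized trimmed sum `N^{-1/2} Σ_{i=[aN]+1}^{[bN]} X_{i:N}`. -/
def trimmedSum (a b : ℝ) {Ω : Type*} (X : ℕ → Ω → ℝ) (N : ℕ) (ω : Ω) : ℝ :=
  (N : ℝ) ^ (-(1/2 : ℝ)) *
    ∑ i ∈ Finset.Icc ((⌊a * (N : ℝ)⌋).toNat + 1) (⌊b * (N : ℝ)⌋).toNat, orderStat X N i ω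

/-- The Winsorized quantile function `Q`. -/
def Qwin (F : ℝ → ℝ) (a b u : ℝ) : ℝ :=
  if u ≤ a then quantile F a else if u ≤ b then quantile F u else quantile F b

def muW (F : ℝ → ℝ) (a b : ℝ) : ℝ := ∫ u in (0:ℝ)..1, Qwin F a b u

def sigmaW2 (F : ℝ → ℝ) (a b : ℝ) : ℝ := ∫ u in (0:ℝ)..1, (Qwin F a b u - muW F a b) ^ 2

def gamma3W (F : ℝ → ℝ) (a b : ℝ) : ℝ := ∫ u in (0:ℝ)..1, (Qwin F a b u - muW F a b) ^ 3

/-- The population trimmed mean `μ(a,b)`. -/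
def muAB (F : ℝ → ℝ) (a b : ℝ) : ℝ := (b - a)⁻¹ * ∫ u in a..b, quantile F u

/-- Standard normal density. -/
def stdGaussPDF (x : ℝ) : ℝ := (Real.sqrt (2 * π))⁻¹ * Real.exp (-x ^ 2 / 2)

/-- Standard normal distribution function. -/
def stdGaussCDF (x : ℝ) : ℝ := ∫ t in Set.Iic x, stdGaussPDF t

def lambda1 (F : ℝ → ℝ) (a b : ℝ) : ℝ := gamma3W F a b / Real.sqrt (sigmaW2 F a b) ^ 3

def delta2W (F f : ℝ → ℝ) (a b : ℝ) : ℝ :=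
  -(a ^ 2) * (muW F a b - quantile F a) ^ 2 / f (quantile F a) +
    (1 - b) ^ 2 * (muW F a b - quantile F b) ^ 2 / f (quantile F b)

def lambda2 (F f : ℝ → ℝ) (a b : ℝ) : ℝ := delta2W F f a b / Real.sqrt (sigmaW2 F a b) ^ 3

/-- The bias term `β_N`. -/
def betaN (F f : ℝ → ℝ) (a b : ℝ) (N : ℕ) : ℝ :=
  (1 / (N : ℝ)) *
    (-(a * N - (⌊a * (N : ℝ)⌋ : ℝ)) * (muAB F a b - quantile F a)
      - a * (1 - a) / (2 * f (quantile F a))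
      + (b * N - (⌊b * (N : ℝ)⌋ : ℝ)) * (muAB F a b - quantile F b)
      + b * (1 - b) / (2 * f (quantile F b)))

/-- The one-term Edgeworth expansion `G_N` for the normalized trimmed mean. -/
def GN (F f : ℝ → ℝ) (a b : ℝ) (N : ℕ) (x : ℝ) : ℝ :=
  stdGaussCDF x - stdGaussPDF x / (6 * Real.sqrt (N : ℝ)) *
    ((lambda1 F a b + 3 * lambda2 F f a b) * (x ^ 2 - 1) +
      6 * N * betaN F f a b N / Real.sqrt (sigmaW2 F a b))

/-- The one-term Edgeworth expansion `H_N` for the Studentized trimmed mean. -/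
def HN (F f : ℝ → ℝ) (a b : ℝ) (N : ℕ) (x : ℝ) : ℝ :=
  stdGaussCDF x + stdGaussPDF x / (6 * Real.sqrt (N : ℝ)) *
    ((2 * x ^ 2 + 1) * lambda1 F a b + 3 * (x ^ 2 + 1) * lambda2 F f a b -
      6 * N * betaN F f a b N / Real.sqrt (sigmaW2 F a b))

/-- Plug-in estimator `μ̂_W` of the Winsorized mean. -/
def hatMuW (a b : ℝ) {Ω : Type*} (X : ℕ → Ω → ℝ) (N : ℕ) (ω : Ω) : ℝ :=
  ((⌊a * (N : ℝ)⌋).toNat + 1 : ℝ) / N * orderStat X N ((⌊a * (N : ℝ)⌋).toNat + 1) ω +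
    (1 / (N : ℝ)) * ∑ i ∈ Finset.Icc ((⌊a * (N : ℝ)⌋).toNat + 2) ((⌊b * (N : ℝ)⌋).toNat - 1),
      orderStat X N i ω +
    ((N : ℝ) - ((⌊b * (N : ℝ)⌋).toNat : ℝ) + 1) / N * orderStat X N (⌊b * (N : ℝ)⌋).toNat ω

/-- Plug-in estimator `S_N²` of the Winsorized variance. -/
def SN2 (a b : ℝ) {Ω : Type*} (X : ℕ → Ω → ℝ) (N : ℕ) (ω : Ω) : ℝ :=
  ((⌊a * (N : ℝ)⌋).toNat + 1 : ℝ) / N * orderStat X N ((⌊a * (N : ℝ)⌋).toNat + 1) ω ^ 2 +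
    (1 / (N : ℝ)) * ∑ i ∈ Finset.Icc ((⌊a * (N : ℝ)⌋).toNat + 2) ((⌊b * (N : ℝ)⌋).toNat - 1),
      orderStat X N i ω ^ 2 +
    ((N : ℝ) - ((⌊b * (N : ℝ)⌋).toNat : ℝ) + 1) / N * orderStat X N (⌊b * (N : ℝ)⌋).toNat ω ^ 2 -
    hatMuW a b X N ω ^ 2

/-- Plug-in estimator of the `r`-th Winsorized moment. -/
def hatMuRW (r : ℕ) (a b : ℝ) {Ω : Type*} (X : ℕ → Ω → ℝ) (N : ℕ) (ω : Ω) : ℝ :=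
  ((⌊a * (N : ℝ)⌋).toNat + 1 : ℝ) / N * orderStat X N ((⌊a * (N : ℝ)⌋).toNat + 1) ω ^ r +
    (1 / (N : ℝ)) * ∑ i ∈ Finset.Icc ((⌊a * (N : ℝ)⌋).toNat + 2) ((⌊b * (N : ℝ)⌋).toNat - 1),
      orderStat X N i ω ^ r +
    ((N : ℝ) - ((⌊b * (N : ℝ)⌋).toNat : ℝ) + 1) / N * orderStat X N (⌊b * (N : ℝ)⌋).toNat ω ^ r

/-- `#{i ∈ {1,…,N} : X i ω ≤ ξ}`. -/
def countLE {Ω : Type*} (X : ℕ → Ω → ℝ) (N : ℕ) (ξ : ℝ) (ω : Ω) : ℕ :=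
  ((Finset.Icc 1 N).filter fun i => X i ω ≤ ξ).card

/-- Signed-sum convention `Σ_{i=k}^m a_i = sign(m−k) Σ_{i=k∧m}^{k∨m} a_i` (with `sign 0 = 0`). -/
def signedSum (k m : ℕ) (g : ℕ → ℝ) : ℝ :=
  (if k < m then 1 else if m < k then -1 else 0) *
    ∑ i ∈ Finset.Icc (min k m) (max k m), g i

/-- `x` Winsorized outside `(ξa, ξb]`. -/
def winsor (ξa ξb x : ℝ) : ℝ := if x ≤ ξa then ξa else if x ≤ ξb then x else ξb

def indLE (ξ x : ℝ) : ℝ := if x ≤ ξ then 1 else 0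

/-- `μ_W = E W_1`. -/
def winsorMean {Ω : Type*} [MeasurableSpace Ω] (P : Measure Ω) (X : ℕ → Ω → ℝ)
    (ξa ξb : ℝ) : ℝ := ∫ ω, winsor ξa ξb (X 1 ω) ∂P

/-- `σ_W² = Var W_1`. -/
def winsorVar {Ω : Type*} [MeasurableSpace Ω] (P : Measure Ω) (X : ℕ → Ω → ℝ)
    (ξa ξb : ℝ) : ℝ := ∫ ω, (winsor ξa ξb (X 1 ω) - winsorMean P X ξa ξb) ^ 2 ∂P

/-- `γ_{3,W} = E (W_1 − μ_W)³`. -/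
def winsorThird {Ω : Type*} [MeasurableSpace Ω] (P : Measure Ω) (X : ℕ → Ω → ℝ)
    (ξa ξb : ℝ) : ℝ := ∫ ω, (winsor ξa ξb (X 1 ω) - winsorMean P X ξa ξb) ^ 3 ∂P

/-- `L_{N,i} = N^{-1/2}(W_i − μ_W)`. -/
def LNi {Ω : Type*} [MeasurableSpace Ω] (P : Measure Ω) (X : ℕ → Ω → ℝ)
    (ξa ξb : ℝ) (N i : ℕ) (ω : Ω) : ℝ :=
  (N : ℝ) ^ (-(1/2 : ℝ)) * (winsor ξa ξb (X i ω) - winsorMean P X ξa ξb)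

/-- `L_N = Σ_{i=1}^N L_{N,i}`. -/
def LNsum {Ω : Type*} [MeasurableSpace Ω] (P : Measure Ω) (X : ℕ → Ω → ℝ)
    (ξa ξb : ℝ) (N : ℕ) (ω : Ω) : ℝ :=
  ∑ i ∈ Finset.Icc 1 N, LNi P X ξa ξb N i ω

/-- `U_{N,(i,j)}`. -/
def UNij (f : ℝ → ℝ) (a b ξa ξb : ℝ) {Ω : Type*} (X : ℕ → Ω → ℝ)
    (N i j : ℕ) (ω : Ω) : ℝ :=
  (N : ℝ) ^ (-(3/2 : ℝ)) *
    (-((indLE ξa (X i ω) - a) * (indLE ξa (X j ω) - a)) / f ξa +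
      (indLE ξb (X i ω) - b) * (indLE ξb (X j ω) - b) / f ξb)

/-- `U_N = Σ_{1 ≤ i < j ≤ N} U_{N,(i,j)}`. -/
def UNsum (f : ℝ → ℝ) (a b ξa ξb : ℝ) {Ω : Type*} (X : ℕ → Ω → ℝ)
    (N : ℕ) (ω : Ω) : ℝ :=
  ∑ i ∈ Finset.Icc 1 N, ∑ j ∈ Finset.Icc (i + 1) N, UNij f a b ξa ξb X N i j ω

/-- `V_{N,1}`. -/
def VN1 {Ω : Type*} [MeasurableSpace Ω] (P : Measure Ω) (f : ℝ → ℝ) (a b ξa ξb : ℝ)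
    (X : ℕ → Ω → ℝ) (N : ℕ) (ω : Ω) : ℝ :=
  2 * a * (((countLE X N ξa ω : ℝ) - a * N) / N) * (winsorMean P X ξa ξb - ξa) / f ξa +
    2 * (1 - b) * (((countLE X N ξb ω : ℝ) - b * N) / N) * (winsorMean P X ξa ξb - ξb) / f ξb

/-- `V_{N,2}`. -/
def VN2 {Ω : Type*} [MeasurableSpace Ω] (P : Measure Ω) (ξa ξb : ℝ)
    (X : ℕ → Ω → ℝ) (N : ℕ) (ω : Ω) : ℝ :=
  (1 / (N : ℝ)) * ∑ i ∈ Finset.Icc 1 N,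
    ((winsor ξa ξb (X i ω) - winsorMean P X ξa ξb) ^ 2 - winsorVar P X ξa ξb)

/-- Kernel density estimator with bandwidth `N^{-1/4}`, centred at the `r`-th order statistic. -/
def fhatAt {Ω : Type*} (X : ℕ → Ω → ℝ) (N r : ℕ) (ω : Ω) : ℝ :=
  (N : ℝ) ^ (-(3/4 : ℝ)) * ∑ i ∈ Finset.Icc 1 N,
    if 2 * (N : ℝ) ^ ((1:ℝ)/4) * |X i ω - orderStat X N r ω| ≤ 1 then (1:ℝ) else 0

/-- Kernel density estimate `f̂(ξ_α)` (centred at `X_{[aN]+1:N}`). -/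
def fhatA (a : ℝ) {Ω : Type*} (X : ℕ → Ω → ℝ) (N : ℕ) (ω : Ω) : ℝ :=
  fhatAt X N ((⌊a * (N : ℝ)⌋).toNat + 1) ω

/-- Kernel density estimate `f̂(ξ_β)` (centred at `X_{[bN]:N}`). -/
def fhatB (b : ℝ) {Ω : Type*} (X : ℕ → Ω → ℝ) (N : ℕ) (ω : Ω) : ℝ :=
  fhatAt X N (⌊b * (N : ℝ)⌋).toNat ω

/-- Estimator `λ̂₁`. -/
def hatLambda1 (a b : ℝ) {Ω : Type*} (X : ℕ → Ω → ℝ) (N : ℕ) (ω : Ω) : ℝ :=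
  (((⌊a * (N : ℝ)⌋).toNat + 1 : ℝ) / N *
      (orderStat X N ((⌊a * (N : ℝ)⌋).toNat + 1) ω - hatMuW a b X N ω) ^ 3 +
    (1 / (N : ℝ)) * ∑ i ∈ Finset.Icc ((⌊a * (N : ℝ)⌋).toNat + 2) ((⌊b * (N : ℝ)⌋).toNat - 1),
      (orderStat X N i ω - hatMuW a b X N ω) ^ 3 +
    ((N : ℝ) - ((⌊b * (N : ℝ)⌋).toNat : ℝ) + 1) / N *
      (orderStat X N (⌊b * (N : ℝ)⌋).toNat ω - hatMuW a b X N ω) ^ 3) /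
    Real.sqrt (SN2 a b X N ω) ^ 3

/-- Estimator `λ̂₂`. -/
def hatLambda2 (a b : ℝ) {Ω : Type*} (X : ℕ → Ω → ℝ) (N : ℕ) (ω : Ω) : ℝ :=
  (-(a ^ 2) * (hatMuW a b X N ω - orderStat X N ((⌊a * (N : ℝ)⌋).toNat + 1) ω) ^ 2 /
      fhatA a X N ω +
    (1 - b) ^ 2 * (hatMuW a b X N ω - orderStat X N (⌊b * (N : ℝ)⌋).toNat ω) ^ 2 /
      fhatB b X N ω) / Real.sqrt (SN2 a b X N ω) ^ 3

/-- Estimator `β̂_N`. -/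
def hatBetaN (a b : ℝ) {Ω : Type*} (X : ℕ → Ω → ℝ) (N : ℕ) (ω : Ω) : ℝ :=
  (1 / (N : ℝ)) *
    (-(a * N - (⌊a * (N : ℝ)⌋ : ℝ)) *
        (trimmedMean a b X N ω - orderStat X N ((⌊a * (N : ℝ)⌋).toNat + 1) ω)
      - a * (1 - a) / (2 * fhatA a X N ω)
      + (b * N - (⌊b * (N : ℝ)⌋ : ℝ)) *
        (trimmedMean a b X N ω - orderStat X N (⌊b * (N : ℝ)⌋).toNat ω)
      + b * (1 - b) / (2 * fhatB b X N ω))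

/-- Empirical Edgeworth expansion `Ĝ_N`. -/
def hatGN (a b : ℝ) {Ω : Type*} (X : ℕ → Ω → ℝ) (N : ℕ) (ω : Ω) (x : ℝ) : ℝ :=
  stdGaussCDF x - stdGaussPDF x / (6 * Real.sqrt (N : ℝ)) *
    ((hatLambda1 a b X N ω + 3 * hatLambda2 a b X N ω) * (x ^ 2 - 1) +
      6 * N * hatBetaN a b X N ω / Real.sqrt (SN2 a b X N ω))

/-- Empirical Edgeworth expansion `Ĥ_N`. -/
def hatHN (a b : ℝ) {Ω : Type*} (X : ℕ → Ω → ℝ) (N : ℕ) (ω : Ω) (x : ℝ) : ℝ :=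
  stdGaussCDF x + stdGaussPDF x / (6 * Real.sqrt (N : ℝ)) *
    ((2 * x ^ 2 + 1) * hatLambda1 a b X N ω + 3 * (x ^ 2 + 1) * hatLambda2 a b X N ω -
      6 * N * hatBetaN a b X N ω / Real.sqrt (SN2 a b X N ω))

/-- Iterated integral `∫_t^{u 1} ∫_{x₁}^{u 2} ⋯ ∫_{x_{k-1}}^{u k} dx_k ⋯ dx_1`. -/
def nestInt : ℕ → (ℕ → ℝ) → ℝ → ℝ
  | 0, _, _ => 1
  | (k + 1), u, t => ∫ x in t..(u 1), nestInt k (fun j => u (j + 1)) x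


/-!
On the event that the empirical distribution function `countLE / N` is within `B √(log N / N)`
of `F` at the `N + 1` points of a grid of mesh `2η/N` around `ξ_α`, monotonicity and the Lipschitz
bound on `F` spread this to the whole interval `[ξ_α - η, ξ_α + η]` at the cost of an `O(1/N)`
error. There the order statistic `X_{k:N}` is `O(√(log N / N))`-close to `ξ_α`, and the kernel sum
counts the sample points in a window of half-width `h = N^{-1/4}/2` around it. By the local
linearization `F y - F x = f(ξ_α) (y - x) + O(ρ (y - x))` this count is
`2hN (f(ξ_α) + O(√(log N) N^{-1/4}))` up to the deviation `O(√(N log N))` of the empirical count,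
which the normalization `N^{-3/4}` turns into another `O(√(log N) N^{-1/4})`. By Hoeffding's
inequality and a union bound over the grid, the event fails with probability `2 (N + 1) N^{-2B²}`,
which is `O(N^{-c})` once `2B² = c + 1`.
-/

open Finset
open scoped Topology NNReal

theorem List.Pairwise.getElem_le_iff_lt_countP {α : Type*} [LinearOrder α] {l : List α}
    (hl : l.Pairwise (· ≤ ·)) {i : ℕ} (hi : i < l.length) (t : α) :
    l[i] ≤ t ↔ i < l.countP (· ≤ t) := by
  have hsplit : l.countP (· ≤ t) = (l.take i).countP (· ≤ t) + (l.drop i).countP (· ≤ t) := by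
    rw [← List.countP_append, List.take_append_drop]
  rw [hsplit, ← List.getElem_cons_drop hi, List.countP_cons]
  constructor
  · intro h
    have hle : ∀ x ∈ l.take i, x ≤ l[i] := by
      have := (List.take_append_drop i l).symm ▸ hl
      exact fun x hx => (List.pairwise_append.1 this).2.2 x hx _
        (List.getElem_cons_drop hi ▸ List.mem_cons_self)
    have htake : (l.take i).countP (· ≤ t) = i := by
      rw [List.countP_eq_length.2 fun x hx => by simpa using (hle x hx).trans h]
      simp [hi.le]
    simp [htake, h]
  · intro h
    by_contra hlt
    have hdrop : (l.drop (i + 1)).countP (· ≤ t) = 0 := by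
      have := List.getElem_cons_drop hi ▸ hl.drop (i := i)
      exact List.countP_eq_zero.2 fun x hx => by
        simpa using (not_le.1 hlt).trans_le (List.rel_of_pairwise_cons this hx)
    have htake := (List.countP_le_length (p := (· ≤ t))).trans (List.length_take_le i l)
    simp only [hdrop, hlt, decide_false, Bool.false_eq_true, if_false] at h
    omega

theorem countP_ofFn_eq_card_filter {α : Type*} (p : α → Bool) (f : ℕ → α) (N : ℕ) :
    (List.ofFn fun j : Fin N => f (j + 1)).countP p = #{i ∈ Icc 1 N | p (f i)} := by
  induction N with
  | zero => simp
  | succ N ih =>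
    rw [List.ofFn_succ', List.concat_eq_append, List.countP_append,
      ← Finset.insert_Icc_right_eq_Icc_add_one (by omega), filter_insert]
    simp only [Fin.val_castSucc, ih, Fin.val_last, List.countP_singleton]
    split_ifs with h <;> simp [h]

theorem exists_grid_cell {x₀ s t : ℝ} (hs : 0 < s) {n : ℕ} (hn : 0 < n)
    (ht : t ∈ Set.Icc x₀ (x₀ + n * s)) :
    ∃ j < n, x₀ + j * s ≤ t ∧ t ≤ x₀ + (j + 1) * s := by
  have hy : 0 ≤ (t - x₀) / s := div_nonneg (by linarith [ht.1]) hs.le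
  refine ⟨min ⌊(t - x₀) / s⌋₊ (n - 1), by omega, ?_, ?_⟩
  · have : ((min ⌊(t - x₀) / s⌋₊ (n - 1) : ℕ) : ℝ) ≤ (t - x₀) / s :=
      (Nat.cast_le.2 (min_le_left _ _)).trans (Nat.floor_le hy)
    rw [le_div_iff₀ hs] at this
    linarith
  · rcases min_choice ⌊(t - x₀) / s⌋₊ (n - 1) with h | h <;> rw [h]
    · have := Nat.lt_floor_add_one ((t - x₀) / s)
      rw [div_lt_iff₀ hs] at this
      linarith
    · rw [Nat.cast_sub hn, Nat.cast_one, sub_add_cancel]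
      exact ht.2

theorem abs_sub_le_of_grid {G H : ℝ → ℝ} (hG : Monotone G) (hH : Monotone H) {x₀ s D w : ℝ}
    (hs : 0 < s) {n : ℕ} (hn : 0 < n) (hgrid : ∀ j ≤ n, |G (x₀ + j * s) - H (x₀ + j * s)| ≤ D)
    (hstep : ∀ j < n, H (x₀ + (j + 1) * s) - H (x₀ + j * s) ≤ w) {t : ℝ}
    (ht : t ∈ Set.Icc x₀ (x₀ + n * s)) :
    |G t - H t| ≤ D + w := by
  obtain ⟨j, hj, hlo, hhi⟩ := exists_grid_cell hs hn ht
  have hlo' := abs_le.1 (hgrid j hj.le)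
  have hhi' := abs_le.1 (hgrid (j + 1) hj)
  push_cast at hhi'
  have := hstep j hj
  rw [abs_le]
  constructor <;> linarith [hG hlo, hG hhi, hH hlo, hH hhi]

theorem apply_quantile_eq {F : ℝ → ℝ} (hbot : Tendsto F atBot (𝓝 0))
    (htop : Tendsto F atTop (𝓝 1)) {a : ℝ} (ha : 0 < a) (ha1 : a < 1)
    (hc : ContinuousAt F (quantile F a)) : F (quantile F a) = a := by
  set S := {x | a ≤ F x}
  have hne : S.Nonempty := ((htop.eventually (lt_mem_nhds ha1)).exists).imp fun _ h => h.le
  have hbdd : BddBelow S := by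
    obtain ⟨x₀, hx₀⟩ := eventually_atBot.1 (hbot.eventually (gt_mem_nhds ha))
    exact ⟨x₀, fun x hx => le_of_not_ge fun h => (hx₀ x h).not_ge hx⟩
  refine le_antisymm ?_ ?_
  · refine le_of_tendsto
      (hc.tendsto.mono_left (nhdsWithin_le_nhds (s := Set.Iio (quantile F a)))) ?_
    filter_upwards [self_mem_nhdsWithin] with x (hx : x < sInf S)
    exact le_of_lt (lt_of_not_ge fun h => (csInf_le hbdd h).not_gt hx)
  · have := hc.continuousWithinAt.mem_closure_image (csInf_mem_closure hne hbdd)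
    exact closure_minimal (Set.image_subset_iff.2 fun x hx => hx) isClosed_Ici this

theorem abs_sub_sub_mul_le_of_hasDerivAt {F f : ℝ → ℝ} {x y f₀ M : ℝ} (hxy : x ≤ y)
    (hderiv : ∀ z ∈ Set.Icc x y, HasDerivAt F (f z) z)
    (hbound : ∀ z ∈ Set.Icc x y, |f z - f₀| ≤ M) :
    |F y - F x - f₀ * (y - x)| ≤ M * (y - x) := by
  have := norm_image_sub_le_of_norm_deriv_le_segment' (f := fun z => F z - f₀ * z)
    (fun z hz => ((hderiv z hz).sub ((hasDerivAt_id z).const_mul f₀)).hasDerivWithinAt)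
    (fun z hz => by simpa using hbound z (Set.Ico_subset_Icc_self hz)) y ⟨hxy, le_rfl⟩
  rw [Real.norm_eq_abs] at this
  convert this using 2
  ring

def LocallyLinearWith (K : ℝ) (F : ℝ → ℝ) (ξ f₀ η : ℝ) : Prop :=
  ∀ ρ ≤ η, ∀ x ∈ Set.Icc (ξ - ρ) (ξ + ρ), ∀ y ∈ Set.Icc (ξ - ρ) (ξ + ρ), x ≤ y →
    |F y - F x - f₀ * (y - x)| ≤ K * ρ * (y - x)

theorem LipschitzOnWith.locallyLinearWith {F f : ℝ → ℝ} {ξ ε η : ℝ} {K : ℝ≥0}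
    (hlip : LipschitzOnWith K f (Set.Ioo (ξ - ε) (ξ + ε)))
    (hderiv : ∀ z ∈ Set.Ioo (ξ - ε) (ξ + ε), HasDerivAt F (f z) z) (hη : η < ε) :
    LocallyLinearWith K F ξ (f ξ) η := by
  intro ρ hρ x hx y hy hxy
  have mem : ∀ z ∈ Set.Icc x y, z ∈ Set.Ioo (ξ - ε) (ξ + ε) :=
    fun z hz => ⟨by linarith [hx.1, hz.1], by linarith [hy.2, hz.2]⟩
  refine abs_sub_sub_mul_le_of_hasDerivAt hxy (fun z hz => hderiv z (mem z hz)) fun z hz => ?_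
  have hξ : ξ ∈ Set.Ioo (ξ - ε) (ξ + ε) := ⟨by linarith [hx.1, hx.2], by linarith [hx.1, hx.2]⟩
  calc |f z - f ξ| ≤ K * |z - ξ| := by
        simpa only [Real.dist_eq] using hlip.dist_le_mul z (mem z hz) ξ hξ
    _ ≤ K * ρ := by
        gcongr
        exact abs_sub_le_iff.2 ⟨by linarith [hy.2, hz.2], by linarith [hx.1, hz.1]⟩

theorem LipschitzOnWith.exists_locallyLinearWith {F f : ℝ → ℝ} {ξ ε : ℝ} {K : ℝ≥0}
    (hlip : LipschitzOnWith K f (Set.Ioo (ξ - ε) (ξ + ε)))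
    (hderiv : ∀ z ∈ Set.Ioo (ξ - ε) (ξ + ε), HasDerivAt F (f z) z) (hε : 0 < ε) (hf : 0 < f ξ) :
    ∃ η > 0, K * η ≤ f ξ / 2 ∧ LocallyLinearWith K F ξ (f ξ) η := by
  refine ⟨min (ε / 2) (f ξ / (2 * K + 1)), lt_min (by linarith) (by positivity), ?_,
    hlip.locallyLinearWith hderiv ((min_le_left _ _).trans_lt (by linarith))⟩
  calc K * min (ε / 2) (f ξ / (2 * K + 1)) ≤ K * (f ξ / (2 * K + 1)) := by
        gcongr
        exact min_le_right _ _
    _ ≤ f ξ / 2 := by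
        rw [mul_div_assoc', div_le_div_iff₀ (by positivity) two_pos]
        nlinarith

def countIcc {Ω : Type*} (X : ℕ → Ω → ℝ) (N : ℕ) (u v : ℝ) (ω : Ω) : ℕ :=
  #{i ∈ Icc 1 N | X i ω ∈ Set.Icc u v}

section Counts

variable {Ω : Type*} (X : ℕ → Ω → ℝ) (N : ℕ) (ω : Ω)

theorem orderStat_le_iff {k : ℕ} (hk : 1 ≤ k) (hkN : k ≤ N) (t : ℝ) :
    orderStat X N k ω ≤ t ↔ k ≤ countLE X N t ω := by
  set l := (List.ofFn fun j : Fin N => X (j + 1) ω).insertionSort (· ≤ ·)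
  have hi : k - 1 < l.length := by simp [l]; omega
  rw [orderStat, List.getD_eq_getElem _ _ hi,
    (List.pairwise_insertionSort _ _).getElem_le_iff_lt_countP hi,
    (List.perm_insertionSort _ _).countP_eq, countP_ofFn_eq_card_filter _ (X · ω)]
  simp only [decide_eq_true_eq, countLE]
  omega

theorem countLE_mono : Monotone fun t => countLE X N t ω :=
  fun _ _ h => card_le_card (monotone_filter_right _ fun _ _ hi => hi.trans h)

theorem countLE_add_countIcc_le {u' u v : ℝ} (hu : u' < u) (huv : u ≤ v) :
    countLE X N u' ω + countIcc X N u v ω ≤ countLE X N v ω := by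
  rw [countLE, countIcc, ← card_union_of_disjoint
    (disjoint_filter.2 fun i _ h₁ h₂ => (h₁.trans_lt hu).not_ge h₂.1)]
  refine card_le_card fun i hi => ?_
  simp only [Finset.mem_union, mem_filter] at hi ⊢
  rcases hi with ⟨hi, hX⟩ | ⟨hi, hX⟩
  exacts [⟨hi, by linarith⟩, ⟨hi, hX.2⟩]

theorem countLE_le_add_countIcc (u v : ℝ) :
    countLE X N v ω ≤ countLE X N u ω + countIcc X N u v ω := by
  refine (card_le_card fun i hi => ?_).trans (card_union_le _ _)
  simp only [Finset.mem_union, mem_filter, Set.mem_Icc] at hi ⊢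
  by_cases hu : X i ω ≤ u
  exacts [Or.inl ⟨hi.1, hu⟩, Or.inr ⟨hi.1, (not_le.1 hu).le, hi.2⟩]

theorem fhatAt_eq_countIcc_div (hN : 0 < N) (r : ℕ) :
    fhatAt X N r ω = countIcc X N (orderStat X N r ω - (2 * (N : ℝ) ^ (1 / 4 : ℝ))⁻¹)
      (orderStat X N r ω + (2 * (N : ℝ) ^ (1 / 4 : ℝ))⁻¹) ω /
        (2 * (2 * (N : ℝ) ^ (1 / 4 : ℝ))⁻¹ * N) := by
  have hwindow : ∀ x : ℝ, 2 * (N : ℝ) ^ (1 / 4 : ℝ) * |x - orderStat X N r ω| ≤ 1 ↔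
      x ∈ Set.Icc (orderStat X N r ω - (2 * (N : ℝ) ^ (1 / 4 : ℝ))⁻¹)
        (orderStat X N r ω + (2 * (N : ℝ) ^ (1 / 4 : ℝ))⁻¹) := fun x => by
    rw [← le_div_iff₀' (by positivity), one_div, abs_sub_le_iff, Set.mem_Icc]
    constructor <;> rintro ⟨h₁, h₂⟩ <;> constructor <;> linarith
  rw [fhatAt, countIcc, sum_boole, filter_congr fun i _ => hwindow (X i ω),
    show -(3 / 4 : ℝ) = 1 / 4 - 1 by norm_num, Real.rpow_sub_one (by positivity)]
  field_simp

end Counts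

section DeterministicBounds

variable {Ω : Type*} (X : ℕ → Ω → ℝ) {N : ℕ} (ω : Ω)

theorem abs_countLE_sub_le_of_grid {F : ℝ → ℝ} (hF : Monotone F) {lo hi L d : ℝ}
    (hlohi : lo < hi) (hN : 0 < N)
    (hlip : ∀ x ∈ Set.Icc lo hi, ∀ y ∈ Set.Icc lo hi, x ≤ y → F y - F x ≤ L * (y - x))
    (hgrid : ∀ j ≤ N, |(countLE X N (lo + j * ((hi - lo) / N)) ω : ℝ) -
      N * F (lo + j * ((hi - lo) / N))| ≤ N * d)
    {t : ℝ} (ht : t ∈ Set.Icc lo hi) :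
    |(countLE X N t ω : ℝ) - N * F t| ≤ N * d + L * (hi - lo) := by
  have hN' : (0 : ℝ) < N := by exact_mod_cast hN
  set s := (hi - lo) / N
  have hs : 0 < s := div_pos (by linarith) hN'
  have hend : lo + N * s = hi := by simp only [s]; field_simp; ring
  have mem : ∀ x : ℝ, 0 ≤ x → x ≤ N → lo + x * s ∈ Set.Icc lo hi := fun x hx₀ hxN =>
    ⟨le_add_of_nonneg_right (by positivity), hend ▸ by gcongr⟩
  refine abs_sub_le_of_grid (G := fun t => (countLE X N t ω : ℝ))
    (fun _ _ h => Nat.cast_le.2 (countLE_mono X N ω h))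
    (fun _ _ h => mul_le_mul_of_nonneg_left (hF h) hN'.le) hs hN hgrid (fun j hj => ?_)
    (by rwa [hend])
  have hj' : (j : ℝ) + 1 ≤ N := by exact_mod_cast hj
  have := hlip _ (mem j (by positivity) (by linarith)) _ (mem (j + 1) (by positivity) hj')
    (by gcongr; linarith)
  calc (N : ℝ) * F (lo + (j + 1) * s) - N * F (lo + j * s)
      = N * (F (lo + (j + 1) * s) - F (lo + j * s)) := by ring
    _ ≤ N * (L * (lo + (j + 1) * s - (lo + j * s))) := by gcongr
    _ = L * (hi - lo) := by simp only [s]; field_simp; ring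

theorem abs_orderStat_sub_le {F : ℝ → ℝ} {lo hi a ξ f₀ M δ D : ℝ} {k : ℕ} (hk : 1 ≤ k)
    (hkN : k ≤ N) (hak : a * N < k) (hka : k ≤ a * N + 1) (hFξ : F ξ = a) (hδ : 0 ≤ δ)
    (hdev : ∀ t ∈ Set.Icc lo hi, |(countLE X N t ω : ℝ) - N * F t| ≤ D)
    (hlin : ∀ x ∈ Set.Icc lo hi, ∀ y ∈ Set.Icc lo hi, x ≤ y →
      |F y - F x - f₀ * (y - x)| ≤ M * (y - x))
    (hM : M ≤ f₀ / 2) (hlo : lo ≤ ξ - δ) (hhi : ξ + δ ≤ hi) (hδD : D + 1 ≤ f₀ / 2 * δ * N) :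
    |orderStat X N k ω - ξ| ≤ δ := by
  have hN : (0 : ℝ) ≤ N := N.cast_nonneg
  have mem : ∀ t, ξ - δ ≤ t → t ≤ ξ + δ → t ∈ Set.Icc lo hi :=
    fun t h₁ h₂ => ⟨hlo.trans h₁, h₂.trans hhi⟩
  have hFup := abs_le.1 (hlin ξ (mem _ (by linarith) (by linarith)) _ (mem _ (by linarith) le_rfl)
    (by linarith : ξ ≤ ξ + δ))
  have hFdn := abs_le.1 (hlin _ (mem _ le_rfl (by linarith)) ξ (mem _ (by linarith) (by linarith))
    (by linarith : ξ - δ ≤ ξ))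
  have hGup := abs_le.1 (hdev _ (mem _ (by linarith) le_rfl))
  have hGdn := abs_le.1 (hdev _ (mem _ le_rfl (by linarith)))
  have hNMδ := mul_le_mul_of_nonneg_left (mul_le_mul_of_nonneg_right hM hδ) hN
  have hNFup := mul_le_mul_of_nonneg_left hFup.1 hN
  have hNFdn := mul_le_mul_of_nonneg_left hFdn.1 hN
  rw [hFξ] at hNFup hNFdn
  rw [abs_sub_le_iff, sub_le_iff_le_add', sub_le_comm]
  constructor
  · rw [orderStat_le_iff X N ω hk hkN]
    exact_mod_cast (by linarith : (k : ℝ) ≤ countLE X N (ξ + δ) ω)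
  · by_contra! hR
    have := (orderStat_le_iff X N ω hk hkN (ξ - δ)).1 hR.le
    have : (k : ℝ) ≤ countLE X N (ξ - δ) ω := by exact_mod_cast this
    linarith

theorem abs_countIcc_div_sub_le {F : ℝ → ℝ} {lo hi R h γ f₀ M D : ℝ} (hN : 0 < N) (hh : 0 < h)
    (hγ : 0 < γ) (hf₀ : 0 ≤ f₀)
    (hdev : ∀ t ∈ Set.Icc lo hi, |(countLE X N t ω : ℝ) - N * F t| ≤ D)
    (hlin : ∀ x ∈ Set.Icc lo hi, ∀ y ∈ Set.Icc lo hi, x ≤ y →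
      |F y - F x - f₀ * (y - x)| ≤ M * (y - x))
    (hlo : lo ≤ R - h - γ) (hhi : R + h ≤ hi) :
    |(countIcc X N (R - h) (R + h) ω : ℝ) / (2 * h * N) - f₀| ≤
      M + γ / (2 * h) * (f₀ + M) + D / (h * N) := by
  have hN' : (0 : ℝ) < N := by exact_mod_cast hN
  have mem : ∀ t, R - h - γ ≤ t → t ≤ R + h → t ∈ Set.Icc lo hi :=
    fun t h₁ h₂ => ⟨hlo.trans h₁, h₂.trans hhi⟩
  -- The window is closed at `R - h`, so from above its count is only controlled through the
  -- count up to the point `R - h - γ` strictly to its left.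
  have hcount₁ : (countLE X N (R - h - γ) ω : ℝ) + countIcc X N (R - h) (R + h) ω ≤
      countLE X N (R + h) ω := by
    exact_mod_cast countLE_add_countIcc_le X N ω (by linarith) (by linarith)
  have hcount₂ : (countLE X N (R + h) ω : ℝ) ≤
      countLE X N (R - h) ω + countIcc X N (R - h) (R + h) ω := by
    exact_mod_cast countLE_le_add_countIcc X N ω (R - h) (R + h)
  have hF₁ := abs_le.1 (hlin _ (mem _ le_rfl (by linarith)) _ (mem _ (by linarith) le_rfl)
    (by linarith : R - h - γ ≤ R + h))
  have hF₂ := abs_le.1 (hlin _ (mem _ (by linarith) (by linarith)) _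
    (mem _ (by linarith) le_rfl) (by linarith : R - h ≤ R + h))
  have hG₁ := abs_le.1 (hdev _ (mem _ le_rfl (by linarith)))
  have hG₂ := abs_le.1 (hdev _ (mem (R - h) (by linarith) (by linarith)))
  have hG₃ := abs_le.1 (hdev _ (mem _ (by linarith) le_rfl))
  have hM : 0 ≤ M := by nlinarith [hF₂.1, hF₂.2]
  have hNF₁ := mul_le_mul_of_nonneg_left hF₁.2 hN'.le
  have hNF₂ := mul_le_mul_of_nonneg_left hF₂.1 hN'.le
  rw [abs_le, le_sub_iff_add_le, le_div_iff₀ (by positivity), sub_le_iff_le_add,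
    div_le_iff₀ (by positivity)]
  constructor
  · have : (-(M + γ / (2 * h) * (f₀ + M) + D / (h * N)) + f₀) * (2 * h * N) =
        2 * h * N * (f₀ - M) - γ * N * (f₀ + M) - 2 * D := by field_simp; ring
    rw [this]
    linarith [mul_nonneg (mul_nonneg hγ.le hN'.le) (add_nonneg hf₀ hM)]
  · have : (M + γ / (2 * h) * (f₀ + M) + D / (h * N) + f₀) * (2 * h * N) =
        N * (2 * h + γ) * (f₀ + M) + 2 * D := by field_simp; ring
    rw [this]
    linarith

-- On `[ξ - η, ξ + η]` the slope of `F` stays between `f₀ / 2` and `3 f₀ / 2`.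
theorem LocallyLinearWith.abs_countLE_sub_le {F : ℝ → ℝ} (hF : Monotone F)
    {ξ f₀ K η d : ℝ} (hlin : LocallyLinearWith K F ξ f₀ η) (hη : 0 < η) (hKη : K * η ≤ f₀ / 2)
    (hN : 0 < N) (hgrid : ∀ j ≤ N, |(countLE X N (ξ - η + j * (2 * η / N)) ω : ℝ) -
      N * F (ξ - η + j * (2 * η / N))| ≤ N * d)
    {t : ℝ} (ht : t ∈ Set.Icc (ξ - η) (ξ + η)) :
    |(countLE X N t ω : ℝ) - N * F t| ≤ N * d + 3 * f₀ * η := by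
  have := abs_countLE_sub_le_of_grid X ω hF (by linarith : ξ - η < ξ + η) hN
    (L := 3 * f₀ / 2) (fun x hx y hy hxy => ?_)
    (by simpa only [show ξ + η - (ξ - η) = 2 * η by ring] using hgrid) ht
  · linarith
  · have := abs_le.1 (hlin η le_rfl x hx y hy hxy)
    nlinarith [mul_le_mul_of_nonneg_right hKη (sub_nonneg.2 hxy)]

theorem abs_fhatA_sub_le {F : ℝ → ℝ} (hF : Monotone F) {a ξ f₀ K η d δ r : ℝ} (ha : 0 < a)
    (hFξ : F ξ = a) (hf₀ : 0 < f₀) (hη : 0 < η) (hKη : K * η ≤ f₀ / 2)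
    (hlin : LocallyLinearWith K F ξ f₀ η) (hN : 0 < N) (haN : a * N + 1 ≤ N)
    (hgrid : ∀ j ≤ N, |(countLE X N (ξ - η + j * (2 * η / N)) ω : ℝ) -
      N * F (ξ - η + j * (2 * η / N))| ≤ N * d)
    (hδ : N * d + 3 * f₀ * η + 1 ≤ f₀ / 2 * δ * N)
    (hr : δ + (2 * (N : ℝ) ^ (1 / 4 : ℝ))⁻¹ + 1 / N ≤ r) (hrη : r ≤ η) :
    |fhatA a X N ω - f₀| ≤
      K * r + (N : ℝ) ^ (1 / 4 : ℝ) / N * (f₀ + K * r + 2 * (N * d + 3 * f₀ * η)) := by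
  have hN' : (0 : ℝ) < N := by exact_mod_cast hN
  have hdev := fun t => hlin.abs_countLE_sub_le X ω hF hη hKη hN hgrid (t := t)
  have hδ₀ : 0 ≤ δ := by
    by_contra! h
    nlinarith [(abs_nonneg _).trans (hgrid 0 N.zero_le), mul_pos hf₀ hN']
  have hh : 0 < (2 * (N : ℝ) ^ (1 / 4 : ℝ))⁻¹ := by positivity
  have hγ : (0 : ℝ) < 1 / N := by positivity
  have hak : a * N < ⌊a * N⌋₊ + 1 := Nat.lt_floor_add_one _
  have hka : (⌊a * N⌋₊ : ℝ) + 1 ≤ a * N + 1 := by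
    linarith [Nat.floor_le (by positivity : 0 ≤ a * N)]
  have hR := abs_le.1 <| abs_orderStat_sub_le X ω (k := ⌊a * N⌋₊ + 1) (by omega)
    (by exact_mod_cast hka.trans haN) (by exact_mod_cast hak) (by exact_mod_cast hka) hFξ hδ₀
    hdev (hlin η le_rfl) hKη (by linarith) (by linarith) hδ
  have hwin := abs_countIcc_div_sub_le X ω (lo := ξ - r) (hi := ξ + r)
    (R := orderStat X N (⌊a * N⌋₊ + 1) ω) hN hh hγ hf₀.le
    (fun t ht => hdev t ⟨by linarith [ht.1], by linarith [ht.2]⟩) (hlin r hrη)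
    (by linarith) (by linarith)
  rw [fhatA, Int.floor_toNat, fhatAt_eq_countIcc_div X N ω hN]
  refine hwin.trans (le_of_eq ?_)
  field_simp
  ring

end DeterministicBounds

theorem exists_rate_coordinates {N : ℕ} (hN : 3 ≤ N) :
    ∃ q s : ℝ, 1 ≤ q ∧ 1 ≤ s ∧ (N : ℝ) ^ (1 / 4 : ℝ) = q ∧ log N ^ (1 / 2 : ℝ) = s ∧
      √(log N / N) = s / q ^ 2 ∧ (N : ℝ) = q ^ 4 := by
  have hN' : (3 : ℝ) ≤ N := by exact_mod_cast hN
  have hlog : 1 ≤ log N := by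
    rw [Real.le_log_iff_exp_le (by linarith)]
    linarith [Real.exp_one_lt_d9]
  refine ⟨_, _, Real.one_le_rpow (by linarith) (by norm_num),
    Real.one_le_rpow hlog (by norm_num), rfl, rfl, ?_, ?_⟩
  · rw [Real.sqrt_div' _ N.cast_nonneg, Real.sqrt_eq_rpow, Real.sqrt_eq_rpow,
      ← Real.rpow_mul_natCast N.cast_nonneg]
    norm_num
  · rw [← Real.rpow_mul_natCast N.cast_nonneg]
    norm_num

theorem localization_radius_le {N : ℕ} (hN : 3 ≤ N) {f₀ B E : ℝ} (hf₀ : 0 < f₀) (hB : 0 ≤ B)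
    (hE : 0 ≤ E) :
    2 * (N * (B * √(log N / N)) + E + 1) / (f₀ * N) + (2 * (N : ℝ) ^ (1 / 4 : ℝ))⁻¹ + 1 / N ≤
      (2 / f₀ * (B + E + 1) + 2) * (log N ^ (1 / 2 : ℝ) / (N : ℝ) ^ (1 / 4 : ℝ)) := by
  obtain ⟨q, s, hq, hs, hq', hs', hd, hNq⟩ := exists_rate_coordinates hN
  have hqs : ∀ n ≥ 1, 1 / q ^ n ≤ s / q := fun n hn => by
    gcongr
    exact le_self_pow₀ hq (by omega)
  rw [hd, hq', hs', hNq]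
  calc 2 * (q ^ 4 * (B * (s / q ^ 2)) + E + 1) / (f₀ * q ^ 4) + (2 * q)⁻¹ + 1 / q ^ 4
      = 2 / f₀ * B * (s / q ^ 2) + 2 / f₀ * (E + 1) * (1 / q ^ 4) + 1 / 2 * (1 / q)
        + 1 / q ^ 4 := by field_simp; ring
    _ ≤ 2 / f₀ * B * (s / q) + 2 / f₀ * (E + 1) * (s / q) + 1 * (s / q) + s / q := by
        gcongr 2 / f₀ * B * ?_ + 2 / f₀ * (E + 1) * ?_ + ?_ * ?_ + ?_
        · gcongr
          exact le_self_pow₀ hq (by norm_num)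
        · exact hqs 4 (by norm_num)
        · norm_num
        · simpa using hqs 1 le_rfl
        · exact hqs 4 (by norm_num)
    _ = (2 / f₀ * (B + E + 1) + 2) * (s / q) := by ring

theorem kernel_error_le {N : ℕ} (hN : 3 ≤ N) {f₀ B E K r η : ℝ} (hK : 0 ≤ K) (hη : 0 ≤ η)
    (hrη : r ≤ η) (hf₀ : 0 ≤ f₀) (hE : 0 ≤ E) :
    K * r + (N : ℝ) ^ (1 / 4 : ℝ) / N * (f₀ + K * r + 2 * (N * (B * √(log N / N)) + E)) ≤
      K * r + (f₀ + K * η + 2 * E + 2 * B) * (log N ^ (1 / 2 : ℝ) / (N : ℝ) ^ (1 / 4 : ℝ)) := by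
  obtain ⟨q, s, hq, hs, hq', hs', hd, hNq⟩ := exists_rate_coordinates hN
  rw [hd, hq', hs', hNq]
  calc K * r + q / q ^ 4 * (f₀ + K * r + 2 * (q ^ 4 * (B * (s / q ^ 2)) + E))
      = K * r + (f₀ + K * r + 2 * E) * (1 / q ^ 3) + 2 * B * (s / q) := by field_simp; ring
    _ ≤ K * r + (f₀ + K * η + 2 * E) * (s / q) + 2 * B * (s / q) := by
        gcongr K * r + (f₀ + ?_ + 2 * E) * ?_ + 2 * B * (s / q)
        · exact mul_le_mul_of_nonneg_left hrη hK
        · gcongr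
          exact le_self_pow₀ hq (by norm_num)
    _ = K * r + (f₀ + K * η + 2 * E + 2 * B) * (s / q) := by ring

theorem eventually_exists_grid_deviation_of_lt_abs_fhatA_sub {Ω : Type*} (X : ℕ → Ω → ℝ)
    {F : ℝ → ℝ} (hF : Monotone F) {a ξ f₀ K η : ℝ} (ha : 0 < a) (ha1 : a < 1) (hFξ : F ξ = a)
    (hf₀ : 0 < f₀) (hK : 0 ≤ K) (hη : 0 < η) (hKη : K * η ≤ f₀ / 2)
    (hlin : LocallyLinearWith K F ξ f₀ η) {B : ℝ} (hB : 0 ≤ B) :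
    ∃ A > 0, ∀ᶠ N : ℕ in atTop, ∀ ω,
      A * log N ^ (1 / 2 : ℝ) / (N : ℝ) ^ (1 / 4 : ℝ) < |fhatA a X N ω - f₀| →
      ∃ j ≤ N, N * (B * √(log N / N)) <
        |(countLE X N (ξ - η + j * (2 * η / N)) ω : ℝ) - N * F (ξ - η + j * (2 * η / N))| := by
  set C := 2 / f₀ * (B + 3 * f₀ * η + 1) + 2
  have hC : 0 < C := by positivity
  refine ⟨K * C + f₀ + K * η + 6 * f₀ * η + 2 * B, by positivity, ?_⟩
  have hrate : Tendsto (fun N : ℕ => log N ^ (1 / 2 : ℝ) / (N : ℝ) ^ (1 / 4 : ℝ)) atTop (𝓝 0) :=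
    ((isLittleO_log_rpow_rpow_atTop _ (by norm_num)).tendsto_div_nhds_zero).comp
      tendsto_natCast_atTop_atTop
  have haN : ∀ᶠ N : ℕ in atTop, a * N + 1 ≤ N :=
    ((tendsto_natCast_atTop_atTop.const_mul_atTop (sub_pos.2 ha1)).eventually_ge_atTop 1).mono
      fun N hN => by linarith
  filter_upwards [eventually_ge_atTop 3, haN, hrate.eventually (ge_mem_nhds (div_pos hη hC))]
    with N hN3 haN hCu ω hω
  by_contra! hgrid
  rw [le_div_iff₀' hC] at hCu
  have := abs_fhatA_sub_le X ω hF ha hFξ hf₀ hη hKη hlin (by omega) haN hgrid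
    (le_of_eq (by field_simp)) (localization_radius_le hN3 hf₀ hB (by positivity)) hCu
  refine hω.not_ge (this.trans ((kernel_error_le hN3 hK hη.le hCu hf₀.le (by positivity)).trans
    (le_of_eq ?_)))
  ring

section Concentration

variable {Ω : Type*} [MeasurableSpace Ω] {P : Measure Ω} [IsProbabilityMeasure P]
  {X : ℕ → Ω → ℝ} {F : ℝ → ℝ}

theorem measureReal_le_abs_countLE_sub_le (hmeas : ∀ i, Measurable (X i))
    (hindep : iIndepFun X P) (hident : ∀ i, IdentDistrib (X i) (X 1) P P)
    (hF : ∀ x, F x = P.real {ω | X 1 ω ≤ x}) (t : ℝ) {N : ℕ} (hN : 0 < N) {d : ℝ} (hd : 0 ≤ d) :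
    P.real {ω | N * d ≤ |(countLE X N t ω : ℝ) - N * F t|} ≤ 2 * exp (-2 * N * d ^ 2) := by
  rw [hF]
  set p := P.real {ω | X 1 ω ≤ t}
  have hind : Measurable ((Set.Iic t).indicator (1 : ℝ → ℝ)) :=
    measurable_one.indicator measurableSet_Iic
  have hmean : ∀ i, ∫ ω, (Set.Iic t).indicator 1 (X i ω) ∂P = p := fun i => by
    rw [← integral_map (hmeas i).aemeasurable hind.aestronglyMeasurable,
      integral_indicator_one measurableSet_Iic, (hident i).map_eq,
      map_measureReal_apply (hmeas 1) measurableSet_Iic]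
    rfl
  have hsubG : HasSubgaussianMGF
      (fun ω => ∑ i ∈ Icc 1 N, ((Set.Iic t).indicator 1 (X i ω) - p))
      (∑ i ∈ Icc 1 N, (‖(1 : ℝ) - 0‖₊ / 2) ^ 2) P := by
    refine HasSubgaussianMGF.sum_of_iIndepFun
      (hindep.comp (fun _ x => (Set.Iic t).indicator 1 x - p) fun _ => hind.sub_const p)
      fun i _ => ?_
    have := hasSubgaussianMGF_of_mem_Icc (μ := P) (hind.comp (hmeas i)).aemeasurable
      (a := 0) (b := 1) (ae_of_all _ fun ω => ?_)
    · simpa only [Function.comp_def, hmean i] using this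
    · by_cases h : X i ω ≤ t <;> simp [h]
  have hsum : ∀ ω, ∑ i ∈ Icc 1 N, ((Set.Iic t).indicator 1 (X i ω) - p) =
      (countLE X N t ω : ℝ) - N * p := fun ω => by
    simp [sum_sub_distrib, Set.indicator_apply, countLE, sum_boole]
  have hvar : ((∑ i ∈ Icc 1 N, (‖(1 : ℝ) - 0‖₊ / 2) ^ 2 : ℝ≥0) : ℝ) = N / 4 := by
    simp; ring
  have hexp : -(N * d) ^ 2 / (2 * (N / 4 : ℝ)) = -2 * N * d ^ 2 := by
    field_simp; ring
  calc P.real {ω | N * d ≤ |(countLE X N t ω : ℝ) - N * p|}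
      ≤ P.real ({ω | N * d ≤ (countLE X N t ω : ℝ) - N * p} ∪
          {ω | N * d ≤ -((countLE X N t ω : ℝ) - N * p)}) :=
        measureReal_mono fun ω hω => by
          simpa only [Set.mem_union, Set.mem_ofPred_eq, ← le_abs] using hω
    _ ≤ _ := measureReal_union_le _ _
    _ ≤ exp (-2 * N * d ^ 2) + exp (-2 * N * d ^ 2) := by
        gcongr
        · have := hsubG.measure_ge_le (by positivity : 0 ≤ (N : ℝ) * d)
          simpa only [hsum, hvar, hexp] using this
        · have := hsubG.neg.measure_ge_le (by positivity : 0 ≤ (N : ℝ) * d)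
          simpa only [Pi.neg_apply, hsum, hvar, hexp] using this
    _ = 2 * exp (-2 * N * d ^ 2) := by ring

theorem measureReal_exists_grid_deviation_le (hmeas : ∀ i, Measurable (X i))
    (hindep : iIndepFun X P) (hident : ∀ i, IdentDistrib (X i) (X 1) P P)
    (hF : ∀ x, F x = P.real {ω | X 1 ω ≤ x}) (x₀ s : ℝ) {N : ℕ} (hN : 0 < N) {d : ℝ}
    (hd : 0 ≤ d) :
    P.real {ω | ∃ j ≤ N,
        N * d < |(countLE X N (x₀ + j * s) ω : ℝ) - N * F (x₀ + j * s)|} ≤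
      2 * (N + 1) * exp (-2 * N * d ^ 2) :=
  calc _ ≤ P.real (⋃ j ∈ range (N + 1),
        {ω | N * d ≤ |(countLE X N (x₀ + j * s) ω : ℝ) - N * F (x₀ + j * s)|}) := by
        refine measureReal_mono (fun ω ⟨j, hj, hω⟩ => Set.mem_biUnion (x := j) ?_ hω.le)
          (measure_ne_top _ _)
        simpa [Nat.lt_succ_iff] using hj
    _ ≤ ∑ j ∈ range (N + 1), 2 * exp (-2 * N * d ^ 2) :=
        (measureReal_biUnion_finset_le _ _).trans (sum_le_sum fun j _ =>
          measureReal_le_abs_countLE_sub_le hmeas hindep hident hF _ hN hd)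
    _ = 2 * (N + 1) * exp (-2 * N * d ^ 2) := by simp; ring

end Concentration

theorem two_mul_add_one_mul_exp_le_rpow {c : ℝ} (hc : 0 ≤ c + 1) {N : ℕ} (hN : 1 ≤ N) :
    2 * (N + 1) * exp (-2 * N * (√((c + 1) / 2) * √(log N / N)) ^ 2) ≤ 4 * (N : ℝ) ^ (-c) := by
  have hN' : (1 : ℝ) ≤ N := by exact_mod_cast hN
  have hexp : exp (-2 * N * (√((c + 1) / 2) * √(log N / N)) ^ 2) = (N : ℝ) ^ (-c) / N := by
    rw [mul_pow, Real.sq_sqrt (by positivity), Real.sq_sqrt (by positivity),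
      ← Real.rpow_sub_one (by positivity), Real.rpow_def_of_pos (by positivity)]
    congr 1
    field_simp
    ring
  rw [hexp, mul_div_assoc', div_le_iff₀ (by positivity)]
  nlinarith [Real.rpow_nonneg (Nat.cast_nonneg N) (-c)]

/-- Lemma 6.1: rate of convergence of the kernel density estimator at the quantile. -/
theorem kernel_density_estimator_rate
    {Ω : Type*} [MeasurableSpace Ω] (P : Measure Ω) [IsProbabilityMeasure P]
    (X : ℕ → Ω → ℝ) (F f : ℝ → ℝ) (a : ℝ) (ha : 0 < a) (ha1 : a < 1)
    (hmeas : ∀ i, Measurable (X i))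
    (hindep : iIndepFun X P)
    (hident : ∀ i, IdentDistrib (X i) (X 1) P P)
    (hF : ∀ x, F x = (P {ω | X 1 ω ≤ x}).toReal)
    (hsmooth : ∃ ε > 0, ∃ K : NNReal,
      (∀ x ∈ Set.Ioo (quantile F a - ε) (quantile F a + ε), HasDerivAt F (f x) x) ∧
      LipschitzOnWith K f (Set.Ioo (quantile F a - ε) (quantile F a + ε)))
    (hfa : 0 < f (quantile F a)) :
    ∀ c > (0 : ℝ), ∃ A > (0 : ℝ),
      (fun N : ℕ => (P {ω | A * Real.log N ^ ((1:ℝ)/2) / (N : ℝ) ^ ((1:ℝ)/4) <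
          |fhatA a X N ω - f (quantile F a)|}).toReal)
        =O[atTop] (fun N : ℕ => (N : ℝ) ^ (-c)) := by
  intro c hc
  obtain ⟨ε, hε, K, hderiv, hlip⟩ := hsmooth
  have : IsProbabilityMeasure (P.map (X 1)) :=
    Measure.isProbabilityMeasure_map (hmeas 1).aemeasurable
  have hFcdf : F = cdf (P.map (X 1)) := funext fun x => by
    rw [hF, cdf_eq_real, map_measureReal_apply (hmeas 1) measurableSet_Iic]
    rfl
  have hFξ : F (quantile F a) = a := apply_quantile_eq (hFcdf ▸ tendsto_cdf_atBot _)
    (hFcdf ▸ tendsto_cdf_atTop _) ha ha1 (hderiv _ ⟨by linarith, by linarith⟩).continuousAt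
  obtain ⟨η, hη, hKη, hlin⟩ := hlip.exists_locallyLinearWith hderiv hε hfa
  -- `B = √((c + 1) / 2)` makes each grid point fail with probability `O(N^{-(c+1)})`.
  obtain ⟨A, hA, hbound⟩ := eventually_exists_grid_deviation_of_lt_abs_fhatA_sub X
    (hFcdf ▸ monotone_cdf _) ha ha1 hFξ hfa K.coe_nonneg hη hKη hlin
    (Real.sqrt_nonneg ((c + 1) / 2))
  refine ⟨A, hA, Asymptotics.IsBigO.of_bound 4 ?_⟩
  filter_upwards [hbound, eventually_ge_atTop 1] with N hN hN1
  rw [Real.norm_of_nonneg ENNReal.toReal_nonneg, Real.norm_of_nonneg (by positivity)]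
  exact (measureReal_mono hN).trans <|
    (measureReal_exists_grid_deviation_le hmeas hindep hident hF _ _ hN1 (by positivity)).trans
      (two_mul_add_one_mul_exp_le_rpow (by linarith) hN1)

end
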